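/- arXiv:1903.06067 — 3 statements merged into one kernel-verified Lean document; each statement's English description precedes it below -/
import Mathlib

section
/- Let p, q ∈ ℝ³ \ {0} and let ω ∈ S² be a unit vector, with post-collision momenta p', q' defined by the stated parametrization. Then ρ(p,q)² ≤ 4 min(|p||q|, |p'||q'|). -/
noncomputable section

open MeasureTheory Real Metric
open scoped RealInnerProductSpace

/-- Momentum space `ℝ³`. -/
abbrev R3 : Type := EuclideanSpace ℝ (Fin 3)

/-- The relative momentum `ρ(p,q) = √(2(|p||q| − p·q))`. -/
def relMom (p q : R3) : ℝ := Real.sqrt (2 * (‖p‖ * ‖q‖ - ⟪p, q⟫))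

/-- Post-collision momentum `p'`. -/
def pPost (p q ω : R3) : R3 :=
  (1 / 2 : ℝ) • (p + q) + (relMom p q / 2) • ω
    + (⟪p + q, ω⟫ / 2 / (‖p‖ + ‖q‖ + relMom p q)) • (p + q)

/-- Post-collision momentum `q'`. -/
def qPost (p q ω : R3) : R3 :=
  (1 / 2 : ℝ) • (p + q) - (relMom p q / 2) • ω
    - (⟪p + q, ω⟫ / 2 / (‖p‖ + ‖q‖ + relMom p q)) • (p + q)

/-- Post-collision energy `p'⁰`. -/
def p0Post (p q ω : R3) : ℝ := (‖p‖ + ‖q‖) / 2 + ⟪p + q, ω⟫ / 2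

/-- Post-collision energy `q'⁰`. -/
def q0Post (p q ω : R3) : ℝ := (‖p‖ + ‖q‖) / 2 - ⟪p + q, ω⟫ / 2

/-- The surface measure `dω` on the unit sphere `S² ⊂ ℝ³` (total mass `4π`). -/
def sphMeasure : Measure (sphere (0 : R3) 1) := (volume : Measure R3).toSphere

/-- The (modified, for `ε > 0`) massless Boltzmann collision operator with scattering
cross-section `σ = C₁ h^{-b}`. -/
def Qcoll (C₁ b ε : ℝ) (f : R3 → ℝ) (p : R3) : ℝ :=
  C₁ * ∫ q : R3, ∫ ω : sphere (0 : R3) 1,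
      (if ε ≤ relMom p q then relMom p q ^ (2 - b) / (‖p‖ * ‖q‖) else 0)
        * (f (pPost p q ω) * f (qPost p q ω) - f p * f q) ∂sphMeasure

/-! `p'` and `q'` lie on the light cone: `|p'| = p'⁰` and `|q'| = q'⁰`, the formula for `q'` being
that for `p'` with `ω` replaced by `-ω`. Hence `4|p'||q'| = (|p| + |q|)² - ((p + q)·ω)²`, which is at
least `(|p| + |q|)² - |p + q|² = ρ²`, while `ρ² ≤ 4|p||q|` is Cauchy–Schwarz. -/

theorem norm_half_add_smul_add_smul_eq {E : Type*} [NormedAddCommGroup E] [InnerProductSpace ℝ E]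
    {P ω : E} {l r : ℝ} (hω : ‖ω‖ = 1) (hl : 0 < l) (hr : 0 ≤ r) (hlr : l ^ 2 = ‖P‖ ^ 2 + r ^ 2) :
    ‖(1 / 2 : ℝ) • P + (r / 2) • ω + (⟪P, ω⟫ / 2 / (l + r)) • P‖ = l / 2 + ⟪P, ω⟫ / 2 := by
  set a := ⟪P, ω⟫
  have hPl : ‖P‖ ≤ l := abs_le_of_sq_le_sq' (by nlinarith) hl.le |>.2
  have haP : |a| ≤ ‖P‖ := by simpa [hω] using abs_real_inner_le_norm P ω
  have hlr_pos : 0 < l + r := by linarith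
  have hv : (1 / 2 : ℝ) • P + (r / 2) • ω + (a / 2 / (l + r)) • P
      = (1 / 2 + a / 2 / (l + r)) • P + (r / 2) • ω := by module
  rw [hv, ← sq_eq_sq₀ (norm_nonneg _) (by linarith [neg_abs_le a]), @norm_add_sq_real,
    norm_smul, norm_smul, real_inner_smul_left, real_inner_smul_right, hω, mul_pow, mul_pow,
    Real.norm_eq_abs, Real.norm_eq_abs, sq_abs, sq_abs, ← sub_eq_of_eq_add hlr]
  field_simp
  ring

theorem relMom_sq (p q : R3) : relMom p q ^ 2 = 2 * (‖p‖ * ‖q‖ - ⟪p, q⟫) :=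
  Real.sq_sqrt (by nlinarith [real_inner_le_norm p q])

theorem relMom_sq_le_four_mul_norm (p q : R3) : relMom p q ^ 2 ≤ 4 * (‖p‖ * ‖q‖) := by
  rw [relMom_sq]
  linarith [neg_le_of_abs_le (abs_real_inner_le_norm p q)]

theorem norm_add_norm_sq (p q : R3) : (‖p‖ + ‖q‖) ^ 2 = ‖p + q‖ ^ 2 + relMom p q ^ 2 := by
  rw [relMom_sq, norm_add_sq_real]
  ring

theorem norm_pPost {p : R3} (q : R3) {ω : R3} (hp : p ≠ 0) (hω : ‖ω‖ = 1) :
    ‖pPost p q ω‖ = p0Post p q ω :=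
  norm_half_add_smul_add_smul_eq hω (by positivity) (Real.sqrt_nonneg _) (norm_add_norm_sq p q)

theorem qPost_eq_pPost_neg (p q ω : R3) : qPost p q ω = pPost p q (-ω) := by
  simp only [qPost, pPost, inner_neg_right, smul_neg, neg_div, neg_smul, sub_eq_add_neg]

theorem norm_qPost {p : R3} (q : R3) {ω : R3} (hp : p ≠ 0) (hω : ‖ω‖ = 1) :
    ‖qPost p q ω‖ = q0Post p q ω := by
  rw [qPost_eq_pPost_neg, norm_pPost q hp (by rwa [norm_neg]), p0Post, q0Post, inner_neg_right,
    neg_div, sub_eq_add_neg]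

theorem relMom_sq_le_four_mul_p0Post_mul_q0Post (p q : R3) {ω : R3} (hω : ‖ω‖ = 1) :
    relMom p q ^ 2 ≤ 4 * (p0Post p q ω * q0Post p q ω) := by
  have h : ⟪p + q, ω⟫ ^ 2 ≤ ‖p + q‖ ^ 2 :=
    sq_le_sq.mpr (by simpa [hω] using abs_real_inner_le_norm (p + q) ω)
  rw [p0Post, q0Post]
  linear_combination h - norm_add_norm_sq p q

theorem relMom_sq_le_four_min_general (p q ω : R3) (hp : p ≠ 0) (hω : ‖ω‖ = 1) :
    relMom p q ^ 2 ≤ 4 * min (‖p‖ * ‖q‖) (‖pPost p q ω‖ * ‖qPost p q ω‖) := by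
  rw [mul_min_of_nonneg _ _ zero_le_four, norm_pPost q hp hω, norm_qPost q hp hω]
  exact le_min (relMom_sq_le_four_mul_norm p q) (relMom_sq_le_four_mul_p0Post_mul_q0Post p q hω)

/-- **Lemma 1.** `ρ(p,q)² ≤ 4 min(|p||q|, |p'||q'|)`. -/
theorem relMom_sq_le_four_min (p q ω : R3) (hp : p ≠ 0) (hq : q ≠ 0) (hω : ‖ω‖ = 1) :
    relMom p q ^ 2 ≤ 4 * min (‖p‖ * ‖q‖) (‖pPost p q ω‖ * ‖qPost p q ω‖) :=
  relMom_sq_le_four_min_general p q ω hp hω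
end
end

section
/- Let p, q ∈ ℝ³ \ {0} and let ω ∈ S² be a unit vector, with post-collision momenta p', q' defined by the stated parametrization. Then the Povzner-type inequality |p'|² + |q'|² − |p|² − |q|² ≤ 2|p||q| holds. -/
/-!
Both outgoing particles stay on the massless shell: `|p'| = p'⁰` and `|q'| = q'⁰`. Both energies are
nonnegative and add up to `|p| + |q|`, so
`|p'|² + |q'|² = (p'⁰)² + (q'⁰)² = (|p| + |q|)² - 2 p'⁰ q'⁰ ≤ (|p| + |q|)²`.
-/

noncomputable section

open MeasureTheory Real Metric
open scoped RealInnerProductSpace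

section InnerProductSpace

variable {E : Type*} [NormedAddCommGroup E] [InnerProductSpace ℝ E]

/-- If `(n, s)` has Minkowski mass `ρ`, the outgoing momentum built from it and a unit vector `ω`
is lightlike. -/
theorem norm_sq_collision_eq {s ω : E} {n ρ : ℝ} (hω : ‖ω‖ = 1) (hs : ‖s‖ ^ 2 = n ^ 2 - ρ ^ 2) :
    ‖(1 / 2 : ℝ) • s + (ρ / 2) • ω + (⟪s, ω⟫ / 2 / (n + ρ)) • s‖ ^ 2 = ((n + ⟪s, ω⟫) / 2) ^ 2 := by
  by_cases hnρ : n + ρ = 0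
  -- then `s = 0`, so the term divided by `n + ρ = 0` vanishes anyway
  · have hs0 : s = 0 := by
      rw [← norm_eq_zero, ← sq_eq_zero_iff, hs, show n = -ρ by linarith]
      ring
    subst hs0
    simp only [smul_zero, zero_add, add_zero, inner_zero_left, norm_smul, hω, mul_one,
      Real.norm_eq_abs, sq_abs]
    rw [show n = -ρ by linarith]
    ring
  · set t := ⟪s, ω⟫
    have hvec : (1 / 2 : ℝ) • s + (ρ / 2) • ω + (t / 2 / (n + ρ)) • s
        = (1 / 2 + t / 2 / (n + ρ)) • s + (ρ / 2) • ω := by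
      rw [add_smul]; abel
    rw [hvec, norm_add_sq_real, norm_smul, norm_smul, mul_pow, mul_pow, real_inner_smul_left,
      real_inner_smul_right, hω, hs, Real.norm_eq_abs, Real.norm_eq_abs, sq_abs, sq_abs]
    field_simp
    ring

end InnerProductSpace

theorem norm_add_sq_eq_sq_sub_relMom_sq (p q : R3) :
    ‖p + q‖ ^ 2 = (‖p‖ + ‖q‖) ^ 2 - relMom p q ^ 2 := by
  rw [norm_add_sq_real, relMom_sq]
  ring

theorem norm_pPost_sq {p q ω : R3} (hω : ‖ω‖ = 1) : ‖pPost p q ω‖ ^ 2 = p0Post p q ω ^ 2 := by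
  rw [pPost, norm_sq_collision_eq hω (norm_add_sq_eq_sq_sub_relMom_sq p q), p0Post]
  ring

theorem q0Post_eq_p0Post_neg (p q ω : R3) : q0Post p q ω = p0Post p q (-ω) := by
  rw [q0Post, p0Post, inner_neg_right]
  ring

theorem p0Post_nonneg {p q ω : R3} (hω : ‖ω‖ = 1) : 0 ≤ p0Post p q ω := by
  have hinner : |⟪p + q, ω⟫| ≤ ‖p‖ + ‖q‖ :=
    calc |⟪p + q, ω⟫| ≤ ‖p + q‖ * ‖ω‖ := abs_real_inner_le_norm _ _
      _ ≤ ‖p‖ + ‖q‖ := by rw [hω, mul_one]; exact norm_add_le p q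
  rw [p0Post]
  linarith [neg_abs_le ⟪p + q, ω⟫]

theorem p0Post_add_q0Post (p q ω : R3) : p0Post p q ω + q0Post p q ω = ‖p‖ + ‖q‖ := by
  rw [p0Post, q0Post]
  ring

theorem povzner_inequality_general (p q ω : R3) (hω : ‖ω‖ = 1) :
    ‖pPost p q ω‖ ^ 2 + ‖qPost p q ω‖ ^ 2 - ‖p‖ ^ 2 - ‖q‖ ^ 2 ≤ 2 * (‖p‖ * ‖q‖) := by
  have hω' : ‖-ω‖ = 1 := by rw [norm_neg, hω]
  have hp' := p0Post_nonneg (p := p) (q := q) hω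
  have hq' : 0 ≤ q0Post p q ω := q0Post_eq_p0Post_neg p q ω ▸ p0Post_nonneg hω'
  have hq'sq : ‖qPost p q ω‖ ^ 2 = q0Post p q ω ^ 2 := by
    rw [qPost_eq_pPost_neg, q0Post_eq_p0Post_neg, norm_pPost_sq hω']
  rw [norm_pPost_sq hω, hq'sq]
  nlinarith [p0Post_add_q0Post p q ω, mul_nonneg hp' hq']

/-- **Lemma 3 (Povzner inequality).** `|p'|² + |q'|² − |p|² − |q|² ≤ 2|p||q|`. -/
theorem povzner_inequality (p q ω : R3) (hp : p ≠ 0) (hq : q ≠ 0) (hω : ‖ω‖ = 1) :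
    ‖pPost p q ω‖ ^ 2 + ‖qPost p q ω‖ ^ 2 - ‖p‖ ^ 2 - ‖q‖ ^ 2 ≤ 2 * (‖p‖ * ‖q‖) :=
  povzner_inequality_general p q ω hω

end
end

section
/- Let H > 0 and C₂ > 0. Then the total conformal time of the spatially flat FLRW spacetime with scale factor R(t) = C₂ √(sinh(2Ht)) is finite: ∫₀^∞ dt / (C₂ √(sinh(2Ht))) = (√2/(C₂ H)) ∫₁^∞ dx / √(x⁴ − 1), and this quantity is finite. -/
open Real MeasureTheory Set

/-!
With `x = e^{Ht}` one has `sinh (2Ht) = (x⁴ - 1) / (2x²)` and `dt = dx / (Hx)`, which turns the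
conformal time integral into `√2/(C₂H) ∫₁^∞ dx/√(x⁴-1)`. The latter converges because its
integrand is at most `(x - 1)^{-1/2}` near `1` and at most `√2 x⁻²` for `x ≥ 2`.
-/

section ExpSubstitution

variable {E : Type*} [NormedAddCommGroup E] [NormedSpace ℝ E] {H : ℝ}

theorem integrableOn_Ioi_comp_exp_mul_iff (g : ℝ → E) (hH : 0 < H) :
    IntegrableOn (fun t ↦ exp (H * t) • g (exp (H * t))) (Ioi 0) ↔ IntegrableOn g (Ioi 1) := by
  rw [integrableOn_Ioi_comp_mul_left_iff (fun s ↦ exp s • g (exp s)) 0 hH, mul_zero,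
    integrableOn_comp_exp_Ioi, exp_zero]

theorem integral_Ioi_comp_exp_mul (g : ℝ → E) (hH : 0 < H) :
    ∫ t in Ioi 0, exp (H * t) • g (exp (H * t)) = H⁻¹ • ∫ x in Ioi 1, g x := by
  rw [integral_comp_mul_left_Ioi (fun s ↦ exp s • g (exp s)) 0 hH, mul_zero,
    integral_comp_exp_Ioi, exp_zero]

end ExpSubstitution

theorem inv_sqrt_pow_four_sub_one_le_rpow {x : ℝ} (hx : 1 < x) :
    (√(x ^ 4 - 1))⁻¹ ≤ (x - 1) ^ (-(1 / 2) : ℝ) := by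
  have hx' : 0 < x - 1 := sub_pos.2 hx
  rw [rpow_neg hx'.le, ← sqrt_eq_rpow]
  exact inv_anti₀ (sqrt_pos.2 hx') (sqrt_le_sqrt (by nlinarith [one_lt_pow₀ hx (n := 3) (by norm_num)]))

theorem inv_sqrt_pow_four_sub_one_le_of_two_le {x : ℝ} (hx : 2 ≤ x) :
    (√(x ^ 4 - 1))⁻¹ ≤ √2 * x ^ (-2 : ℝ) := by
  have hx4 : 16 ≤ x ^ 4 := le_trans (by norm_num) (pow_le_pow_left₀ zero_le_two hx 4)
  calc (√(x ^ 4 - 1))⁻¹ ≤ (√(x ^ 4 / 2))⁻¹ :=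
        inv_anti₀ (sqrt_pos.2 (by positivity)) (sqrt_le_sqrt (by linarith))
    _ = √2 * x ^ (-2 : ℝ) := by
        rw [rpow_neg (by positivity), rpow_two, sqrt_div' _ zero_le_two,
          show x ^ 4 = (x ^ 2) ^ 2 by ring, sqrt_sq (by positivity), inv_div, div_eq_mul_inv]

theorem integrableOn_inv_sqrt_pow_four_sub_one :
    IntegrableOn (fun x : ℝ ↦ (√(x ^ 4 - 1))⁻¹) (Ioi 1) := by
  have hmeas : AEStronglyMeasurable (fun x : ℝ ↦ (√(x ^ 4 - 1))⁻¹) :=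
    (by fun_prop : Measurable fun x : ℝ ↦ (√(x ^ 4 - 1))⁻¹).aestronglyMeasurable
  have near : IntegrableOn (fun x : ℝ ↦ (x - 1) ^ (-(1 / 2) : ℝ)) (Ioc 1 2) := by
    have h := (intervalIntegral.intervalIntegrable_rpow' (r := -(1 / 2)) (by norm_num)
      (a := 0) (b := 1)).comp_sub_right 1
    norm_num at h
    exact (intervalIntegrable_iff_integrableOn_Ioc_of_le one_le_two).1 h
  have tail : IntegrableOn (fun x : ℝ ↦ √2 * x ^ (-2 : ℝ)) (Ioi 2) :=
    (integrableOn_Ioi_rpow_of_lt (by norm_num) two_pos).const_mul _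
  rw [← Ioc_union_Ioi_eq_Ioi one_le_two]
  refine IntegrableOn.union (near.mono' hmeas.restrict ?_) (tail.mono' hmeas.restrict ?_)
  · filter_upwards [ae_restrict_mem measurableSet_Ioc] with x hx
    rw [norm_of_nonneg (by positivity)]
    exact inv_sqrt_pow_four_sub_one_le_rpow hx.1
  · filter_upwards [ae_restrict_mem measurableSet_Ioi] with x hx
    rw [norm_of_nonneg (by positivity)]
    exact inv_sqrt_pow_four_sub_one_le_of_two_le (le_of_lt hx)

theorem inv_sqrt_sinh_two_mul (s : ℝ) :
    (√(sinh (2 * s)))⁻¹ = √2 * (exp s * (√(exp s ^ 4 - 1))⁻¹) := by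
  have hsinh : sinh (2 * s) = (exp s ^ 4 - 1) / (2 * exp s ^ 2) := by
    rw [sinh_eq, exp_neg, show exp (2 * s) = exp s ^ 2 by rw [← exp_nat_mul]; ring_nf]
    field_simp
  rw [hsinh, sqrt_div' _ (by positivity), sqrt_mul zero_le_two, sqrt_sq (exp_pos s).le]
  field_simp

theorem total_conformal_time_finite_general (H C₂ : ℝ) (hH : 0 < H) :
    IntegrableOn (fun t : ℝ => (C₂ * Real.sqrt (Real.sinh (2 * H * t)))⁻¹) (Set.Ioi 0) ∧
    IntegrableOn (fun x : ℝ => (Real.sqrt (x ^ 4 - 1))⁻¹) (Set.Ioi 1) ∧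
    (∫ t in Set.Ioi (0 : ℝ), (C₂ * Real.sqrt (Real.sinh (2 * H * t)))⁻¹)
      = Real.sqrt 2 / (C₂ * H) * ∫ x in Set.Ioi (1 : ℝ), (Real.sqrt (x ^ 4 - 1))⁻¹ := by
  set g : ℝ → ℝ := fun x ↦ (√(x ^ 4 - 1))⁻¹
  have hconf : (fun t : ℝ ↦ (C₂ * √(sinh (2 * H * t)))⁻¹)
      = fun t ↦ √2 / C₂ * (exp (H * t) • g (exp (H * t))) := by
    funext t
    rw [mul_inv, mul_assoc 2, inv_sqrt_sinh_two_mul, smul_eq_mul]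
    ring
  refine ⟨?_, integrableOn_inv_sqrt_pow_four_sub_one, ?_⟩
  · rw [hconf]
    exact ((integrableOn_Ioi_comp_exp_mul_iff g hH).2
      integrableOn_inv_sqrt_pow_four_sub_one).const_mul _
  · rw [hconf, integral_const_mul, integral_Ioi_comp_exp_mul g hH, smul_eq_mul]
    ring

/-- The total conformal time of the flat FLRW spacetime with `R(t) = C₂ √(sinh 2Ht)` is
finite and equals `(√2/(C₂H)) ∫₁^∞ dx/√(x⁴−1)`. -/
theorem total_conformal_time_finite (H C₂ : ℝ) (hH : 0 < H) (hC : 0 < C₂) :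
    IntegrableOn (fun t : ℝ => (C₂ * Real.sqrt (Real.sinh (2 * H * t)))⁻¹) (Set.Ioi 0) ∧
    IntegrableOn (fun x : ℝ => (Real.sqrt (x ^ 4 - 1))⁻¹) (Set.Ioi 1) ∧
    (∫ t in Set.Ioi (0 : ℝ), (C₂ * Real.sqrt (Real.sinh (2 * H * t)))⁻¹)
      = Real.sqrt 2 / (C₂ * H) * ∫ x in Set.Ioi (1 : ℝ), (Real.sqrt (x ^ 4 - 1))⁻¹ :=
  total_conformal_time_finite_general H C₂ hH
end
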